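/- For skew shapes: if the Littlewood–Richardson-type coefficient K_{λ/ν,μ} (the number of skew tableaux of shape λ/ν and evaluation μ) is nonzero, then λ ≥ μ ∪ ν in the dominance order on partitions. -/

import Mathlib

/-- `(r, c)` is a cell of the skew diagram `out/inn`. -/
def IsCell (out inn : ℕ → ℕ) (r c : ℕ) : Prop := inn r ≤ c ∧ c < out r

/-- A skew tableau of shape `out/inn` with positive integer entries (encoded as
`0` outside the diagram): rows weakly increase, columns strictly increase. -/
def IsSkewTab (out inn : ℕ → ℕ) (T : ℕ → ℕ → ℕ) : Prop :=
  (∀ r c, ¬ IsCell out inn r c → T r c = 0) ∧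
  (∀ r c, IsCell out inn r c → 1 ≤ T r c) ∧
  (∀ r c, IsCell out inn r c → IsCell out inn r (c + 1) → T r c ≤ T r (c + 1)) ∧
  (∀ r c, IsCell out inn r c → IsCell out inn (r + 1) c → T r c < T (r + 1) c)

/-- `κ = μ ∪ ν` is the partition obtained by sorting the concatenation of the
parts of the partitions `μ` and `ν`: for every positive `v`, the number of parts
of `κ` equal to `v` is the sum of those of `μ` and of `ν`. -/
def IsSortedUnionP (mu nu kappa : ℕ → ℕ) : Prop :=
  ∀ v : ℕ, 0 < v →
    {k : ℕ | kappa k = v}.ncard = {k : ℕ | mu k = v}.ncard + {k : ℕ | nu k = v}.ncard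

/-- Dominance order: `P ⊵ Q`, i.e. `|P| = |Q|` (the partial sums eventually
agree) and every partial sum of `P` is at least the corresponding one of `Q`. -/
def Dominates (P Q : ℕ → ℕ) : Prop :=
  (∃ n₀ : ℕ, ∀ n : ℕ, n₀ ≤ n →
    ∑ k ∈ Finset.range n, P k = ∑ k ∈ Finset.range n, Q k) ∧
  ∀ n : ℕ, ∑ k ∈ Finset.range n, Q k ≤ ∑ k ∈ Finset.range n, P k

/-- A downward closed finset of naturals is an initial segment. -/
lemma dcl_eq_range (S : Finset ℕ) (h : ∀ x ∈ S, ∀ y, y < x → y ∈ S) :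
    S = Finset.range S.card := by
  ext k
  simp only [Finset.mem_range]
  constructor
  · intro hk
    have hsub : Finset.range (k + 1) ⊆ S := by
      intro y hy
      simp only [Finset.mem_range] at hy
      rcases eq_or_lt_of_le (Nat.lt_succ_iff.mp hy) with h1 | h1
      · rwa [h1]
      · exact h k hk y h1
    have := Finset.card_le_card hsub
    simpa using this
  · intro hk
    by_contra hkS
    have hsub : S ⊆ Finset.range k := by
      intro x hx
      simp only [Finset.mem_range]
      by_contra hxk
      rcases eq_or_lt_of_le (not_lt.mp hxk) with h1 | h1
      · exact hkS (h1 ▸ hx)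
      · exact hkS (h x hx k h1)
    have := Finset.card_le_card hsub
    simp only [Finset.card_range] at this
    omega

lemma card_le_sum_aux (P : Finset (ℕ × ℕ)) (n : ℕ) (f : ℕ → Finset ℕ)
    (h : ∀ p ∈ P, p.1 < n ∧ p.2 ∈ f p.1) :
    P.card ≤ ∑ r ∈ Finset.range n, (f r).card := by
  classical
  calc P.card ≤ ((Finset.range n).biUnion (fun r => (f r).image (fun c => (r, c)))).card := by
        apply Finset.card_le_card
        intro p hp
        simp only [Finset.mem_biUnion, Finset.mem_range, Finset.mem_image]
        exact ⟨p.1, (h p hp).1, p.2, (h p hp).2, rfl⟩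
    _ ≤ ∑ r ∈ Finset.range n, ((f r).image (fun c => (r, c))).card :=
        Finset.card_biUnion_le
    _ ≤ ∑ r ∈ Finset.range n, (f r).card :=
        Finset.sum_le_sum fun r _ => Finset.card_image_le

lemma chain_lemma (lam nu : ℕ → ℕ) (T : ℕ → ℕ → ℕ) (hT : IsSkewTab lam nu T)
    (c r d : ℕ) (h : ∀ i ≤ d, IsCell lam nu (r + i) c) :
    T r c + d ≤ T (r + d) c := by
  induction d with
  | zero => simp
  | succ d ih =>
    have h1 := ih (fun i hi => h i (Nat.le_succ_of_le hi))
    have h2 := hT.2.2.2 (r + d) c (h d (Nat.le_succ _))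
      (by have := h (d + 1) le_rfl; rwa [show r + (d + 1) = r + d + 1 by ring] at this)
    rw [show r + (d + 1) = r + d + 1 by ring]
    omega

lemma column_bound (lam nu : ℕ → ℕ) (T : ℕ → ℕ → ℕ)
    (hlam : Antitone lam) (hnu : Antitone nu) (hT : IsSkewTab lam nu T)
    (a b c N : ℕ) :
    ((Finset.range N).filter
        (fun r => a + b ≤ r ∧ nu r ≤ c ∧ c < lam r ∧ T r c ≤ a)).card
      ≤ ((Finset.Ico b (a + b)).filter (fun r => c < nu r)).card := by
  classical
  rcases Finset.eq_empty_or_nonempty ((Finset.range N).filter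
      (fun r => a + b ≤ r ∧ nu r ≤ c ∧ c < lam r ∧ T r c ≤ a)) with he | hne
  · simp [he]
  · set Bad := (Finset.range N).filter
      (fun r => a + b ≤ r ∧ nu r ≤ c ∧ c < lam r ∧ T r c ≤ a) with hBadDef
    set r0 := Bad.min' hne with hr0Def
    have hr0mem : r0 ∈ (Finset.range N).filter
        (fun r => a + b ≤ r ∧ nu r ≤ c ∧ c < lam r ∧ T r c ≤ a) := Bad.min'_mem hne
    rw [Finset.mem_filter, Finset.mem_range] at hr0mem
    obtain ⟨hr0N, hnr0, hnur0, hlamr0, hTr0⟩ := hr0mem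
    set v0 := T r0 c with hv0Def
    have hv0pos : 1 ≤ v0 := hT.2.1 r0 c ⟨hnur0, hlamr0⟩
    have step1 : ∃ k, 1 ≤ k ∧ k ≤ v0 ∧ c < nu (r0 - k) := by
      by_contra hcon
      push_neg at hcon
      have hcells : ∀ i ≤ v0, IsCell lam nu (r0 - v0 + i) c := by
        intro i hi
        constructor
        · rcases eq_or_lt_of_le hi with h1 | h1
          · rw [show r0 - v0 + i = r0 by omega]
            exact hnur0
          · have heq : r0 - v0 + i = r0 - (v0 - i) := by omega
            rw [heq]
            exact hcon (v0 - i) (by omega) (by omega)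
        · have : lam r0 ≤ lam (r0 - v0 + i) := hlam (by omega)
          omega
      have hch := chain_lemma lam nu T hT c (r0 - v0) v0 hcells
      rw [show r0 - v0 + v0 = r0 by omega] at hch
      have h1 : 1 ≤ T (r0 - v0) c := hT.2.1 _ _ (by
        have := hcells 0 (by omega)
        rwa [Nat.add_zero] at this)
      omega
    obtain ⟨k, hk1, hkv, hknu⟩ := step1
    have hm : c < nu (r0 - v0) :=
      lt_of_lt_of_le hknu (hnu (show r0 - v0 ≤ r0 - k by omega))
    have hsub2 : Bad ⊆ Finset.Icc r0 (r0 + (a - v0)) := by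
      intro r hr
      have hrge : r0 ≤ r := Bad.min'_le _ hr
      have hr' : r ∈ (Finset.range N).filter
          (fun r => a + b ≤ r ∧ nu r ≤ c ∧ c < lam r ∧ T r c ≤ a) := hr
      rw [Finset.mem_filter, Finset.mem_range] at hr'
      obtain ⟨-, hnr, hnur, hlamr, hTr⟩ := hr'
      have hcells : ∀ i ≤ r - r0, IsCell lam nu (r0 + i) c := by
        intro i hi
        refine ⟨le_trans (hnu (show r0 ≤ r0 + i by omega)) hnur0, ?_⟩
        have : lam r ≤ lam (r0 + i) := hlam (by omega)
        omega
      have hch := chain_lemma lam nu T hT c r0 (r - r0) hcells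
      rw [show r0 + (r - r0) = r by omega] at hch
      simp only [Finset.mem_Icc]
      omega
    have hcard1 : Bad.card ≤ a - v0 + 1 := by
      have := Finset.card_le_card hsub2
      rw [Nat.card_Icc] at this
      omega
    have hsub3 : Finset.Ico b (min (a + b) (r0 - v0 + 1)) ⊆
        (Finset.Ico b (a + b)).filter (fun r => c < nu r) := by
      intro r hr
      simp only [Finset.mem_Ico, lt_min_iff] at hr
      simp only [Finset.mem_filter, Finset.mem_Ico]
      refine ⟨⟨hr.1, hr.2.1⟩, ?_⟩
      have : nu (r0 - v0) ≤ nu r := hnu (by omega)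
      omega
    have hcard2 : min (a + b) (r0 - v0 + 1) - b ≤
        ((Finset.Ico b (a + b)).filter (fun r => c < nu r)).card := by
      have := Finset.card_le_card hsub3
      rwa [Nat.card_Ico] at this
    omega

lemma double_count (f : ℕ → ℕ) (V n : ℕ) (hV : ∀ k, f k ≤ V) :
    ∑ k ∈ Finset.range n, f k
      = ∑ v ∈ Finset.Icc 1 V, ((Finset.range n).filter (fun k => v ≤ f k)).card := by
  classical
  calc ∑ k ∈ Finset.range n, f k
      = ∑ k ∈ Finset.range n, ((Finset.Icc 1 V).filter (fun v => v ≤ f k)).card := by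
        apply Finset.sum_congr rfl
        intro k _
        have h1 : (Finset.Icc 1 V).filter (fun v => v ≤ f k) = Finset.Icc 1 (f k) := by
          ext v
          simp only [Finset.mem_filter, Finset.mem_Icc]
          have := hV k
          omega
        rw [h1, Nat.card_Icc]
        omega
    _ = ∑ k ∈ Finset.range n, ∑ v ∈ Finset.Icc 1 V, if v ≤ f k then 1 else 0 :=
        Finset.sum_congr rfl fun k _ => by rw [Finset.card_filter]
    _ = ∑ v ∈ Finset.Icc 1 V, ∑ k ∈ Finset.range n, if v ≤ f k then 1 else 0 :=
        Finset.sum_comm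
    _ = _ := Finset.sum_congr rfl fun v _ => by rw [← Finset.card_filter]

lemma filter_card_min (f : ℕ → ℕ) (hf : Antitone f) (N : ℕ)
    (hN : ∀ k, N ≤ k → f k = 0) (v : ℕ) (hv : 1 ≤ v) (n : ℕ) :
    ((Finset.range n).filter (fun k => v ≤ f k)).card
      = min n (((Finset.range N).filter (fun k => v ≤ f k)).card) := by
  classical
  set G := ((Finset.range N).filter (fun k => v ≤ f k)).card with hG
  have hmem : ∀ k, v ≤ f k → k < N := by
    intro k hk
    by_contra h
    have := hN k (by omega)
    omega
  have hdcl : (Finset.range N).filter (fun k => v ≤ f k) = Finset.range G := by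
    apply dcl_eq_range
    intro x hx y hy
    simp only [Finset.mem_filter, Finset.mem_range] at hx ⊢
    exact ⟨by omega, le_trans hx.2 (hf (le_of_lt hy))⟩
  have hkey : (Finset.range n).filter (fun k => v ≤ f k) = Finset.range (min n G) := by
    ext k
    simp only [Finset.mem_filter, Finset.mem_range, lt_min_iff]
    constructor
    · rintro ⟨h1, h2⟩
      refine ⟨h1, ?_⟩
      have : k ∈ Finset.range G := by
        rw [← hdcl]
        simp only [Finset.mem_filter, Finset.mem_range]
        exact ⟨hmem k h2, h2⟩
      simpa using this
    · rintro ⟨h1, h2⟩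
      refine ⟨h1, ?_⟩
      have : k ∈ (Finset.range N).filter (fun k => v ≤ f k) := by
        rw [hdcl]; simpa using h2
      exact (Finset.mem_filter.mp this).2
  rw [hkey, Finset.card_range]

lemma G_eq_sum (f : ℕ → ℕ) (N V v : ℕ) (hV : ∀ k, f k ≤ V) (hv : 1 ≤ v) :
    ((Finset.range N).filter (fun k => v ≤ f k)).card
      = ∑ w ∈ Finset.Icc v V, ((Finset.range N).filter (fun k => f k = w)).card := by
  classical
  have hrep : (Finset.range N).filter (fun k => v ≤ f k)
      = (Finset.Icc v V).biUnion (fun w => (Finset.range N).filter (fun k => f k = w)) := by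
    ext k
    simp only [Finset.mem_filter, Finset.mem_range, Finset.mem_biUnion, Finset.mem_Icc]
    constructor
    · rintro ⟨hkN, hvf⟩
      exact ⟨f k, ⟨hvf, hV k⟩, hkN, rfl⟩
    · rintro ⟨w, ⟨hw1, _⟩, hkN, rfl⟩
      exact ⟨hkN, hw1⟩
  rw [hrep, Finset.card_biUnion]
  intro x _ y _ hxy
  simp only [Finset.disjoint_left, Finset.mem_filter]
  rintro p ⟨_, h1⟩ ⟨_, h2⟩
  exact hxy (h1 ▸ h2 ▸ rfl)

lemma ncard_eq_card (f : ℕ → ℕ) (N : ℕ) (hN : ∀ k, N ≤ k → f k = 0) (v : ℕ)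
    (hv : 1 ≤ v) :
    {k : ℕ | f k = v}.ncard = ((Finset.range N).filter (fun k => f k = v)).card := by
  rw [← Set.ncard_coe_finset]
  congr 1
  ext k
  simp only [Set.mem_setOf_eq, Finset.coe_filter, Finset.mem_range]
  constructor
  · intro h
    refine ⟨?_, h⟩
    by_contra hk
    have := hN k (by omega)
    omega
  · exact fun h => h.2

lemma merge_choice (Gm Gn Gk : ℕ → ℕ)
    (hm : Antitone Gm) (hn : Antitone Gn)
    (hk : ∀ v, 1 ≤ v → Gk v = Gm v + Gn v) (n W : ℕ) (hW : 1 ≤ W) (hWn : Gk W ≤ n) :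
    ∃ a b, a + b = n ∧ ∀ v, 1 ≤ v → min n (Gk v) ≤ min a (Gm v) + min b (Gn v) := by
  classical
  have hex : ∃ v, 1 ≤ v ∧ Gk v ≤ n := ⟨W, hW, hWn⟩
  obtain ⟨w, ⟨hw1, hwn⟩, hminw⟩ :
      ∃ w, (1 ≤ w ∧ Gk w ≤ n) ∧ ∀ v, v < w → ¬(1 ≤ v ∧ Gk v ≤ n) :=
    ⟨Nat.find hex, Nat.find_spec hex, fun v hv => Nat.find_min hex hv⟩
  have hkw := hk w hw1
  by_cases hw2 : w = 1
  · subst hw2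
    refine ⟨n - Gn 1, Gn 1, by omega, ?_⟩
    intro v hv
    have h1 := hk v hv
    have h2 : Gm v ≤ Gm 1 := hm hv
    have h3 : Gn v ≤ Gn 1 := hn hv
    have h5 := hk 1 le_rfl
    omega
  · have hw3 : 2 ≤ w := by omega
    have hprev : n + 1 ≤ Gk (w - 1) := by
      have := hminw (w - 1) (by omega)
      push_neg at this
      have := this (by omega)
      omega
    have hkw1 := hk (w - 1) (by omega)
    refine ⟨min (Gm (w - 1)) (n - Gn w), n - min (Gm (w - 1)) (n - Gn w), by omega, ?_⟩
    intro v hv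
    have h1 := hk v hv
    have hmw : Gm w ≤ Gm (w - 1) := hm (by omega)
    have hnw : Gn w ≤ Gn (w - 1) := hn (by omega)
    rcases le_or_gt w v with hwv | hvw
    · have h2 : Gm v ≤ Gm w := hm hwv
      have h3 : Gn v ≤ Gn w := hn hwv
      omega
    · have h2 : Gm (w - 1) ≤ Gm v := hm (by omega)
      have h3 : Gn (w - 1) ≤ Gn v := hn (by omega)
      omega

/- STATEMENT 11: If the coefficient K_{λ/ν,μ} (the number of skew tableaux of
shape λ/ν and evaluation μ) is nonzero — i.e. there exists a skew tableau of
shape λ/ν in which the letter j appears μ_j times — then λ ≥ μ ∪ ν in the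
dominance order. -/
theorem stmt11 (lam nu mu kappa : ℕ →₀ ℕ)
    (hlam : Antitone ⇑lam) (hnu : Antitone ⇑nu) (hmu : Antitone ⇑mu)
    (hsub : ∀ k : ℕ, nu k ≤ lam k)
    (hkapA : Antitone ⇑kappa)
    (hkap : IsSortedUnionP ⇑mu ⇑nu ⇑kappa)
    (T : ℕ → ℕ → ℕ)
    (hT : IsSkewTab ⇑lam ⇑nu T)
    (heval : ∀ j : ℕ,
      {p : ℕ × ℕ | IsCell ⇑lam ⇑nu p.1 p.2 ∧ T p.1 p.2 = j + 1}.ncard = mu j) :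
    Dominates ⇑lam ⇑kappa := by
  classical
  -- bounds
  set N := ((lam.support ∪ nu.support ∪ mu.support ∪ kappa.support).sup id) + 1 with hNdef
  have hbound : ∀ f : ℕ →₀ ℕ,
      f.support ⊆ lam.support ∪ nu.support ∪ mu.support ∪ kappa.support →
      ∀ k, N ≤ k → f k = 0 := by
    intro f hf k hk
    by_contra h
    have hks : k ∈ lam.support ∪ nu.support ∪ mu.support ∪ kappa.support :=
      hf (Finsupp.mem_support_iff.mpr h)
    have := Finset.le_sup (f := id) hks
    simp only [id] at this
    omega
  have hlamN : ∀ k, N ≤ k → lam k = 0 := hbound lam (by intro x hx; simp [hx])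
  have hnuN : ∀ k, N ≤ k → nu k = 0 := hbound nu (by intro x hx; simp [hx])
  have hmuN : ∀ k, N ≤ k → mu k = 0 := hbound mu (by intro x hx; simp [hx])
  have hkapN : ∀ k, N ≤ k → kappa k = 0 := hbound kappa (by intro x hx; simp [hx])
  set M := lam 0 with hMdef
  set V := lam 0 + nu 0 + mu 0 + kappa 0 with hVdef
  have hVlam : ∀ k, lam k ≤ V := fun k => le_trans (hlam (Nat.zero_le k)) (by omega)
  have hVnu : ∀ k, nu k ≤ V := fun k => le_trans (hnu (Nat.zero_le k)) (by omega)
  have hVmu : ∀ k, mu k ≤ V := fun k => le_trans (hmu (Nat.zero_le k)) (by omega)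
  have hVkap : ∀ k, kappa k ≤ V := fun k => le_trans (hkapA (Nat.zero_le k)) (by omega)
  -- the diagram as a finset
  set D : Finset (ℕ × ℕ) :=
    (Finset.range N ×ˢ Finset.range M).filter (fun p => IsCell ⇑lam ⇑nu p.1 p.2) with hDdef
  have hDmem : ∀ p : ℕ × ℕ, p ∈ D ↔ IsCell ⇑lam ⇑nu p.1 p.2 := by
    intro p
    rw [hDdef, Finset.mem_filter, Finset.mem_product, Finset.mem_range, Finset.mem_range]
    constructor
    · exact fun h => h.2
    · intro h
      refine ⟨⟨?_, ?_⟩, h⟩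
      · by_contra hc
        have := hlamN p.1 (by omega)
        have := h.2
        omega
      · have h1 : lam p.1 ≤ lam 0 := hlam (Nat.zero_le _)
        have := h.2
        omega
  have hDj : ∀ j, (D.filter (fun p => T p.1 p.2 = j + 1)).card = mu j := by
    intro j
    have hset : {p : ℕ × ℕ | IsCell ⇑lam ⇑nu p.1 p.2 ∧ T p.1 p.2 = j + 1}
        = ↑(D.filter (fun p => T p.1 p.2 = j + 1)) := by
      ext p
      simp only [Set.mem_setOf_eq, Finset.coe_filter, hDmem]
    rw [← heval j, hset, Set.ncard_coe_finset]
  have hT1 : ∀ r c, IsCell ⇑lam ⇑nu r c → 1 ≤ T r c := hT.2.1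
  have hDa : ∀ a, (D.filter (fun p => T p.1 p.2 ≤ a)).card = ∑ j ∈ Finset.range a, mu j := by
    intro a
    have hrep : D.filter (fun p => T p.1 p.2 ≤ a)
        = (Finset.range a).biUnion (fun j => D.filter (fun p => T p.1 p.2 = j + 1)) := by
      ext p
      simp only [Finset.mem_filter, Finset.mem_biUnion, Finset.mem_range]
      constructor
      · rintro ⟨hp, hTa⟩
        have h1 : 1 ≤ T p.1 p.2 := hT1 _ _ ((hDmem p).mp hp)
        exact ⟨T p.1 p.2 - 1, by omega, hp, by omega⟩
      · rintro ⟨j, hj, hp, hTp⟩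
        exact ⟨hp, by omega⟩
    rw [hrep, Finset.card_biUnion]
    · exact Finset.sum_congr rfl fun j _ => hDj j
    · intro x _ y _ hxy
      simp only [Finset.disjoint_left, Finset.mem_filter]
      rintro p ⟨_, h1⟩ ⟨_, h2⟩
      omega
  -- MAIN INEQUALITY
  have main : ∀ a b : ℕ,
      ∑ j ∈ Finset.range a, mu j + ∑ i ∈ Finset.range b, nu i
        ≤ ∑ r ∈ Finset.range (a + b), lam r := by
    intro a b
    set A := D.filter (fun p => T p.1 p.2 ≤ a) with hAdef
    have hsplit := Finset.card_filter_add_card_filter_not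
      (s := A) (p := fun p => p.1 < a + b)
    have hA1 : (A.filter (fun p => p.1 < a + b)).card
        ≤ ∑ r ∈ Finset.range (a + b), (lam r - nu r) := by
      have hle := card_le_sum_aux (A.filter (fun p => p.1 < a + b)) (a + b)
        (fun r => Finset.Ico (nu r) (lam r)) ?_
      · calc (A.filter (fun p => p.1 < a + b)).card
            ≤ ∑ r ∈ Finset.range (a + b), (Finset.Ico (nu r) (lam r)).card := hle
          _ = ∑ r ∈ Finset.range (a + b), (lam r - nu r) := by
              exact Finset.sum_congr rfl fun r _ => Nat.card_Ico _ _
      · intro p hp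
        rw [Finset.mem_filter, hAdef, Finset.mem_filter] at hp
        obtain ⟨⟨hpD, _⟩, hpr⟩ := hp
        have hcell := (hDmem p).mp hpD
        exact ⟨hpr, Finset.mem_Ico.mpr ⟨hcell.1, hcell.2⟩⟩
    have hA2 : (A.filter (fun p => ¬ p.1 < a + b)).card
        ≤ ∑ r ∈ Finset.Ico b (a + b), nu r := by
      set A2 := A.filter (fun p => ¬ p.1 < a + b) with hA2def
      have himg : (A2.image Prod.swap).card = A2.card :=
        Finset.card_image_of_injective _ Prod.swap_injective
      have step1 : (A2.image Prod.swap).card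
          ≤ ∑ c ∈ Finset.range M, ((Finset.range N).filter
              (fun r => a + b ≤ r ∧ nu r ≤ c ∧ c < lam r ∧ T r c ≤ a)).card := by
        apply card_le_sum_aux
        intro q hq
        rw [Finset.mem_image] at hq
        obtain ⟨p, hp, rfl⟩ := hq
        obtain ⟨r, c⟩ := p
        simp only [Prod.swap_prod_mk]
        rw [hA2def, Finset.mem_filter, hAdef, Finset.mem_filter] at hp
        obtain ⟨⟨hpD, hTa⟩, hpr⟩ := hp
        have hcell := (hDmem (r, c)).mp hpD
        have hpD' := hpD
        rw [hDdef, Finset.mem_filter, Finset.mem_product, Finset.mem_range, Finset.mem_range] at hpD'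
        refine ⟨hpD'.1.2, ?_⟩
        rw [Finset.mem_filter, Finset.mem_range]
        exact ⟨hpD'.1.1, ⟨by simp only at hpr; omega, hcell.1, hcell.2, hTa⟩⟩
      have step2 : ∑ c ∈ Finset.range M, ((Finset.range N).filter
              (fun r => a + b ≤ r ∧ nu r ≤ c ∧ c < lam r ∧ T r c ≤ a)).card
          ≤ ∑ c ∈ Finset.range M, ((Finset.Ico b (a + b)).filter (fun r => c < nu r)).card :=
        Finset.sum_le_sum fun c _ => column_bound ⇑lam ⇑nu T hlam hnu hT a b c N
      have step3 : ∑ c ∈ Finset.range M, ((Finset.Ico b (a + b)).filter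
              (fun r => c < nu r)).card
          = ∑ r ∈ Finset.Ico b (a + b), nu r := by
        calc ∑ c ∈ Finset.range M, ((Finset.Ico b (a + b)).filter (fun r => c < nu r)).card
            = ∑ c ∈ Finset.range M, ∑ r ∈ Finset.Ico b (a + b), if c < nu r then 1 else 0 :=
              Finset.sum_congr rfl fun c _ => by rw [Finset.card_filter]
          _ = ∑ r ∈ Finset.Ico b (a + b), ∑ c ∈ Finset.range M, if c < nu r then 1 else 0 :=
              Finset.sum_comm
          _ = ∑ r ∈ Finset.Ico b (a + b), nu r := by
              apply Finset.sum_congr rfl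
              intro r _
              rw [← Finset.card_filter]
              have h1 : nu r ≤ M := le_trans (hsub r) (hlam (Nat.zero_le r))
              have h2 : (Finset.range M).filter (fun c => c < nu r) = Finset.range (nu r) := by
                ext c
                simp only [Finset.mem_filter, Finset.mem_range]
                omega
              rw [h2, Finset.card_range]
      omega
    have hkey : ∑ j ∈ Finset.range a, mu j
        ≤ ∑ r ∈ Finset.range (a + b), (lam r - nu r) + ∑ r ∈ Finset.Ico b (a + b), nu r := by
      have := hDa a
      rw [← hAdef] at this
      omega
    have e1 : ∑ r ∈ Finset.range (a + b), lam r
        = ∑ r ∈ Finset.range (a + b), nu r + ∑ r ∈ Finset.range (a + b), (lam r - nu r) := by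
      rw [← Finset.sum_add_distrib]
      exact Finset.sum_congr rfl fun r _ => by have := hsub r; omega
    have e2 : ∑ r ∈ Finset.range b, nu r + ∑ r ∈ Finset.Ico b (a + b), nu r
        = ∑ r ∈ Finset.range (a + b), nu r := by
      rw [Finset.range_eq_Ico, Finset.range_eq_Ico]
      exact Finset.sum_Ico_consecutive (⇑nu) (Nat.zero_le b) (show b ≤ a + b by omega)
    omega
  -- count functions
  have hE : ∀ v, 1 ≤ v →
      ((Finset.range N).filter (fun k => kappa k = v)).card
        = ((Finset.range N).filter (fun k => mu k = v)).card
          + ((Finset.range N).filter (fun k => nu k = v)).card := by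
    intro v hv
    have h := hkap v hv
    rwa [ncard_eq_card ⇑kappa N hkapN v hv, ncard_eq_card ⇑mu N hmuN v hv,
      ncard_eq_card ⇑nu N hnuN v hv] at h
  have hGsum : ∀ v, 1 ≤ v →
      ((Finset.range N).filter (fun k => v ≤ kappa k)).card
        = ((Finset.range N).filter (fun k => v ≤ mu k)).card
          + ((Finset.range N).filter (fun k => v ≤ nu k)).card := by
    intro v hv
    rw [G_eq_sum ⇑kappa N V v hVkap hv, G_eq_sum ⇑mu N V v hVmu hv,
      G_eq_sum ⇑nu N V v hVnu hv, ← Finset.sum_add_distrib]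
    exact Finset.sum_congr rfl fun w hw => hE w (le_trans hv (Finset.mem_Icc.mp hw).1)
  -- Part 2: every partial sum of kappa is dominated
  have part2 : ∀ n, ∑ k ∈ Finset.range n, kappa k ≤ ∑ k ∈ Finset.range n, lam k := by
    intro n
    have hGmono : ∀ (f : ℕ → ℕ), Antitone f → Antitone
        (fun v => ((Finset.range N).filter (fun k => v ≤ f k)).card) := by
      intro f hf v v' hvv'
      apply Finset.card_le_card
      intro k hk
      rw [Finset.mem_filter] at hk ⊢
      exact ⟨hk.1, le_trans hvv' hk.2⟩
    have hWn : ((Finset.range N).filter (fun k => V + 1 ≤ kappa k)).card ≤ n := by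
      have : (Finset.range N).filter (fun k => V + 1 ≤ kappa k) = ∅ := by
        apply Finset.filter_eq_empty_iff.mpr
        intro k _
        have := hVkap k
        omega
      rw [this]
      simp
    obtain ⟨a, b, hab, hmin⟩ := merge_choice
      (fun v => ((Finset.range N).filter (fun k => v ≤ mu k)).card)
      (fun v => ((Finset.range N).filter (fun k => v ≤ nu k)).card)
      (fun v => ((Finset.range N).filter (fun k => v ≤ kappa k)).card)
      (hGmono ⇑mu hmu) (hGmono ⇑nu hnu) hGsum n (V + 1) (by omega) hWn
    have h1 : ∑ k ∈ Finset.range n, kappa k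
        = ∑ v ∈ Finset.Icc 1 V, min n (((Finset.range N).filter (fun k => v ≤ kappa k)).card) := by
      rw [double_count ⇑kappa V n hVkap]
      exact Finset.sum_congr rfl fun v hv =>
        filter_card_min ⇑kappa hkapA N hkapN v (Finset.mem_Icc.mp hv).1 n
    have h2 : ∑ j ∈ Finset.range a, mu j
        = ∑ v ∈ Finset.Icc 1 V, min a (((Finset.range N).filter (fun k => v ≤ mu k)).card) := by
      rw [double_count ⇑mu V a hVmu]
      exact Finset.sum_congr rfl fun v hv =>
        filter_card_min ⇑mu hmu N hmuN v (Finset.mem_Icc.mp hv).1 a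
    have h3 : ∑ i ∈ Finset.range b, nu i
        = ∑ v ∈ Finset.Icc 1 V, min b (((Finset.range N).filter (fun k => v ≤ nu k)).card) := by
      rw [double_count ⇑nu V b hVnu]
      exact Finset.sum_congr rfl fun v hv =>
        filter_card_min ⇑nu hnu N hnuN v (Finset.mem_Icc.mp hv).1 b
    calc ∑ k ∈ Finset.range n, kappa k
        = ∑ v ∈ Finset.Icc 1 V, min n (((Finset.range N).filter (fun k => v ≤ kappa k)).card) := h1
      _ ≤ ∑ v ∈ Finset.Icc 1 V,
            (min a (((Finset.range N).filter (fun k => v ≤ mu k)).card)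
              + min b (((Finset.range N).filter (fun k => v ≤ nu k)).card)) :=
          Finset.sum_le_sum fun v hv => hmin v (Finset.mem_Icc.mp hv).1
      _ = ∑ j ∈ Finset.range a, mu j + ∑ i ∈ Finset.range b, nu i := by
          rw [Finset.sum_add_distrib, ← h2, ← h3]
      _ ≤ ∑ r ∈ Finset.range (a + b), lam r := main a b
      _ = ∑ k ∈ Finset.range n, lam k := by rw [hab]
  -- Part 1: eventual equality
  have hstable : ∀ (f : ℕ → ℕ), (∀ k, N ≤ k → f k = 0) → ∀ n, N ≤ n →
      ∑ k ∈ Finset.range n, f k = ∑ k ∈ Finset.range N, f k := by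
    intro f hf n hn
    symm
    apply Finset.sum_subset (Finset.range_subset_range.mpr hn)
    intro k _ hk2
    rw [Finset.mem_range] at hk2
    exact hf k (by omega)
  have hTle : ∀ p ∈ D, T p.1 p.2 ≤ N := by
    intro p hp
    by_contra hcon
    have hcell := (hDmem p).mp hp
    have h1 : 1 ≤ T p.1 p.2 := hT1 _ _ hcell
    have hj : p ∈ D.filter (fun q => T q.1 q.2 = (T p.1 p.2 - 1) + 1) := by
      rw [Finset.mem_filter]
      exact ⟨hp, by omega⟩
    have hcard := hDj (T p.1 p.2 - 1)
    have hmu0 : mu (T p.1 p.2 - 1) = 0 := hmuN _ (by omega)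
    rw [hmu0] at hcard
    rw [Finset.card_eq_zero.mp hcard] at hj
    simp at hj
  have hDfull : D.filter (fun p => T p.1 p.2 ≤ N) = D := Finset.filter_eq_self.mpr hTle
  have hDcard : D.card = ∑ r ∈ Finset.range N, (lam r - nu r) := by
    have hrep : D = (Finset.range N).biUnion
        (fun r => (Finset.Ico (nu r) (lam r)).image (fun c => (r, c))) := by
      ext p
      rw [hDmem]
      simp only [Finset.mem_biUnion, Finset.mem_range, Finset.mem_image, Finset.mem_Ico]
      constructor
      · intro h
        refine ⟨p.1, ?_, p.2, ⟨h.1, h.2⟩, rfl⟩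
        by_contra hc
        have := hlamN p.1 (by omega)
        have := h.2
        omega
      · rintro ⟨r, hr, c, ⟨hc1, hc2⟩, rfl⟩
        exact ⟨hc1, hc2⟩
    rw [hrep, Finset.card_biUnion]
    · apply Finset.sum_congr rfl
      intro r _
      rw [Finset.card_image_of_injective _ (fun x y h => (Prod.mk.injEq _ _ _ _).mp h |>.2),
        Nat.card_Ico]
    · intro x _ y _ hxy
      simp only [Finset.disjoint_left, Finset.mem_image]
      rintro p ⟨c1, _, rfl⟩ ⟨c2, _, heq⟩
      exact hxy ((Prod.mk.injEq _ _ _ _).mp heq).1.symm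
  have hEqN : ∑ k ∈ Finset.range N, lam k = ∑ k ∈ Finset.range N, kappa k := by
    have e1 : ∑ k ∈ Finset.range N, lam k
        = ∑ k ∈ Finset.range N, nu k + ∑ k ∈ Finset.range N, (lam k - nu k) := by
      rw [← Finset.sum_add_distrib]
      exact Finset.sum_congr rfl fun k _ => by have := hsub k; omega
    have e3 : D.card = ∑ j ∈ Finset.range N, mu j := by
      calc D.card = (D.filter (fun p => T p.1 p.2 ≤ N)).card := by rw [hDfull]
        _ = ∑ j ∈ Finset.range N, mu j := hDa N
    have e4 : ∑ k ∈ Finset.range N, kappa k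
        = ∑ j ∈ Finset.range N, mu j + ∑ k ∈ Finset.range N, nu k := by
      rw [double_count ⇑kappa V N hVkap, double_count ⇑mu V N hVmu,
        double_count ⇑nu V N hVnu, ← Finset.sum_add_distrib]
      exact Finset.sum_congr rfl fun v hv => hGsum v (Finset.mem_Icc.mp hv).1
    omega
  refine ⟨⟨N, fun n hn => ?_⟩, part2⟩
  rw [hstable ⇑lam hlamN n hn, hstable ⇑kappa hkapN n hn, hEqN]
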